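/- The Euclidean spheres S(0,R) ⊂ ℝ³\{0} have zero extrinsic curvature with respect to the radial conformal metric g_F for all R > 0 if and only if F(t) = λ√t for some nonzero constant λ. -/

import Mathlib

/-!
Since `F(R²) − 2F'(R²)R²` depends only on `t = R²`, the curvature vanishes for all `R > 0`
exactly when `F t = 2 t F'(t)` for all `t > 0`. Along this equation the quotient `F t / √t` has
zero derivative, so it is constant on the connected set `(0, ∞)`; conversely `λ√t` solves it.
-/

open Real Set

lemma sq_div_sq_eq_zero_iff {a R : ℝ} (hR : R ≠ 0) : a ^ 2 / R ^ 2 = 0 ↔ a = 0 := by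
  simp [hR]

lemma forall_pos_sq_iff {P : ℝ → Prop} : (∀ R > (0 : ℝ), P (R ^ 2)) ↔ ∀ t > (0 : ℝ), P t :=
  ⟨fun h t ht => sq_sqrt ht.le ▸ h (√t) (sqrt_pos.mpr ht),
    fun h R hR => h (R ^ 2) (pow_pos hR 2)⟩

section RadialODE

variable {F F' : ℝ → ℝ}

lemma hasDerivAt_div_sqrt_zero {t : ℝ} (ht : 0 < t) (hd : HasDerivAt F (F' t) t)
    (hode : F t - 2 * F' t * t = 0) : HasDerivAt (fun s => F s / √s) 0 t := by
  have hs : √t ≠ 0 := (sqrt_pos.mpr ht).ne'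
  refine (hd.div (hasDerivAt_sqrt ht.ne') hs).congr_deriv ?_
  have hst : √t ^ 2 = t := sq_sqrt ht.le
  field_simp
  linear_combination -hode + 2 * F' t * hst

theorem eq_mul_sqrt_of_sub_two_mul_deriv_eq_zero (hd : ∀ t > (0 : ℝ), HasDerivAt F (F' t) t)
    (hode : ∀ t > (0 : ℝ), F t - 2 * F' t * t = 0) : ∀ t > (0 : ℝ), F t = F 1 * √t := by
  have hquot : ∀ t > (0 : ℝ), HasDerivAt (fun s => F s / √s) 0 t := fun t ht =>
    hasDerivAt_div_sqrt_zero ht (hd t ht) (hode t ht)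
  intro t ht
  have hconst : F t / √t = F 1 / √1 :=
    isOpen_Ioi.is_const_of_deriv_eq_zero isPreconnected_Ioi
      (fun s hs => (hquot s hs).differentiableAt.differentiableWithinAt)
      (fun s hs => (hquot s hs).deriv) ht (mem_Ioi.mpr one_pos)
  rwa [sqrt_one, div_one, div_eq_iff (sqrt_pos.mpr ht).ne'] at hconst

theorem sub_two_mul_deriv_eq_zero_of_eq_mul_sqrt {l : ℝ}
    (hd : ∀ t > (0 : ℝ), HasDerivAt F (F' t) t) (hF : ∀ t > (0 : ℝ), F t = l * √t) :
    ∀ t > (0 : ℝ), F t - 2 * F' t * t = 0 := by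
  intro t ht
  have hderiv : HasDerivAt F (l * (1 / (2 * √t))) t :=
    ((hasDerivAt_sqrt ht.ne').const_mul l).congr_of_eventuallyEq <|
      Filter.eventually_of_mem (Ioi_mem_nhds ht) hF
  have hst : √t ^ 2 = t := sq_sqrt ht.le
  rw [(hd t ht).unique hderiv, hF t ht]
  field_simp
  linear_combination l * hst

end RadialODE

theorem stmt8 (F F' : ℝ → ℝ)
    (hd : ∀ t > (0 : ℝ), HasDerivAt F (F' t) t)
    (hne : ∀ t > (0 : ℝ), F t ≠ 0) :
    (∀ R > (0 : ℝ), (F (R ^ 2) - 2 * F' (R ^ 2) * R ^ 2) ^ 2 / R ^ 2 = 0) ↔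
    ∃ l : ℝ, l ≠ 0 ∧ ∀ t > (0 : ℝ), F t = l * Real.sqrt t := by
  calc (∀ R > (0 : ℝ), (F (R ^ 2) - 2 * F' (R ^ 2) * R ^ 2) ^ 2 / R ^ 2 = 0)
      ↔ ∀ R > (0 : ℝ), F (R ^ 2) - 2 * F' (R ^ 2) * R ^ 2 = 0 :=
        forall₂_congr fun _ hR => sq_div_sq_eq_zero_iff hR.ne'
    _ ↔ ∀ t > (0 : ℝ), F t - 2 * F' t * t = 0 :=
        forall_pos_sq_iff (P := fun t => F t - 2 * F' t * t = 0)
    _ ↔ ∃ l : ℝ, l ≠ 0 ∧ ∀ t > (0 : ℝ), F t = l * √t :=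
        ⟨fun hode => ⟨F 1, hne 1 one_pos, eq_mul_sqrt_of_sub_two_mul_deriv_eq_zero hd hode⟩,
          fun ⟨_, _, hF⟩ => sub_two_mul_deriv_eq_zero_of_eq_mul_sqrt hd hF⟩
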